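/- Suppose ε < 1/2. Then for every n ∈ ℕ the boundaries do not cross: U_n > L_n. -/

import Mathlib

open MeasureTheory ProbabilityTheory Filter Asymptotics
open scoped ENNReal

namespace SeqMC

variable {Ω : Type*} [MeasurableSpace Ω]

/-- Partial sums: `S n = X_1 + ⋯ + X_n`, where the i-th variable `X_i` is `X (i-1)`. -/
def S (X : ℕ → Ω → ℕ) (n : ℕ) (ω : Ω) : ℕ := ∑ i ∈ Finset.range n, X i ω

/-- `X` is an i.i.d. Bernoulli(p) sequence under the probability measure `P`. -/
structure IsBernoulliSeq (P : Measure Ω) (p : ℝ) (X : ℕ → Ω → ℕ) : Prop where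
  isProb : IsProbabilityMeasure P
  meas : ∀ i, Measurable (X i)
  bdd : ∀ i ω, X i ω ≤ 1
  indep : iIndepFun X P
  bern : ∀ i, P (X i ⁻¹' {1}) = ENNReal.ofReal p

/-- The walk stayed strictly between the boundaries at all steps `1 ≤ k ≤ n`, i.e. `τ > n`. -/
def notStopped (X : ℕ → Ω → ℕ) (U L : ℕ → ℤ) (n : ℕ) (ω : Ω) : Prop :=
  ∀ k, 1 ≤ k → k ≤ n → L k < (S X k ω : ℤ) ∧ (S X k ω : ℤ) < U k

/-- The event `τ ≤ n` and `S_τ ≥ U_τ`. -/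
def hitUpperBy (X : ℕ → Ω → ℕ) (U L : ℕ → ℤ) (n : ℕ) (ω : Ω) : Prop :=
  ∃ k, 1 ≤ k ∧ k ≤ n ∧ notStopped X U L (k - 1) ω ∧ U k ≤ (S X k ω : ℤ)

/-- The event `τ ≤ n` and `S_τ ≤ L_τ`. -/
def hitLowerBy (X : ℕ → Ω → ℕ) (U L : ℕ → ℤ) (n : ℕ) (ω : Ω) : Prop :=
  ∃ k, 1 ≤ k ∧ k ≤ n ∧ notStopped X U L (k - 1) ω ∧ (S X k ω : ℤ) ≤ L k

/-- The recursively defined boundaries `(U_n, L_n)`: `U_1 = 2`, `L_1 = -1` and for `n ≥ 2`,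
`U_n` is the least `j ∈ {1,2,…}` with `P_α(τ ≥ n, S_n ≥ j) + P_α(τ < n, S_τ ≥ U_τ) ≤ ε_n`,
`L_n` is the greatest `j ∈ ℤ` with `P_α(τ ≥ n, S_n ≤ j) + P_α(τ < n, S_τ ≤ L_τ) ≤ ε_n`.
Here `Pα` is the measure `P_α` and `εs` the spending sequence. -/
noncomputable def bnd (Pα : Measure Ω) (X : ℕ → Ω → ℕ) (εs : ℕ → ℝ) : ℕ → ℤ × ℤ
  | 0 => (2, -1)
  | 1 => (2, -1)
  | n + 2 =>
      let U : ℕ → ℤ := fun k => if h : k < n + 2 then (bnd Pα X εs k).1 else 0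
      let L : ℕ → ℤ := fun k => if h : k < n + 2 then (bnd Pα X εs k).2 else 0
      (sInf {j : ℤ | 1 ≤ j ∧
          Pα {ω | notStopped X U L (n + 1) ω ∧ j ≤ (S X (n + 2) ω : ℤ)} +
            Pα {ω | hitUpperBy X U L (n + 1) ω} ≤ ENNReal.ofReal (εs (n + 2))},
       sSup {j : ℤ |
          Pα {ω | notStopped X U L (n + 1) ω ∧ (S X (n + 2) ω : ℤ) ≤ j} +
            Pα {ω | hitLowerBy X U L (n + 1) ω} ≤ ENNReal.ofReal (εs (n + 2))})
  termination_by n => n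
  decreasing_by all_goals omega

/-- The upper boundary `U_n`. -/
noncomputable def Ub (Pα : Measure Ω) (X : ℕ → Ω → ℕ) (εs : ℕ → ℝ) (n : ℕ) : ℤ :=
  (bnd Pα X εs n).1

/-- The lower boundary `L_n`. -/
noncomputable def Lb (Pα : Measure Ω) (X : ℕ → Ω → ℕ) (εs : ℕ → ℝ) (n : ℕ) : ℤ :=
  (bnd Pα X εs n).2

/-- The stopping time `τ = inf {k ≥ 1 : S_k ≥ U_k or S_k ≤ L_k}`, with `0` encoding `τ = ∞`. -/
noncomputable def tau (Pα : Measure Ω) (X : ℕ → Ω → ℕ) (εs : ℕ → ℝ) (ω : Ω) : ℕ :=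
  sInf {k | 1 ≤ k ∧ ((S X k ω : ℤ) ≤ Lb Pα X εs k ∨ Ub Pα X εs k ≤ (S X k ω : ℤ))}

/-- `τ` as an extended nonneg real (`∞` when the algorithm never stops). -/
noncomputable def tauE (Pα : Measure Ω) (X : ℕ → Ω → ℕ) (εs : ℕ → ℝ) (ω : Ω) : ℝ≥0∞ :=
  if tau Pα X εs ω = 0 then ⊤ else (tau Pα X εs ω : ℝ≥0∞)

/-- The event `τ < ∞` and `S_τ ≥ U_τ`. -/
def hitsUpper (Pα : Measure Ω) (X : ℕ → Ω → ℕ) (εs : ℕ → ℝ) (ω : Ω) : Prop :=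
  tau Pα X εs ω ≠ 0 ∧ Ub Pα X εs (tau Pα X εs ω) ≤ (S X (tau Pα X εs ω) ω : ℤ)

/-- The event `τ < ∞` and `S_τ ≤ L_τ`. -/
def hitsLower (Pα : Measure Ω) (X : ℕ → Ω → ℕ) (εs : ℕ → ℝ) (ω : Ω) : Prop :=
  tau Pα X εs ω ≠ 0 ∧ (S X (tau Pα X εs ω) ω : ℤ) ≤ Lb Pα X εs (tau Pα X εs ω)

/-- The estimator `p̂ = S_τ/τ` (`= α` if `τ = ∞`). -/
noncomputable def phat (Pα : Measure Ω) (X : ℕ → Ω → ℕ) (εs : ℕ → ℝ) (α : ℝ) (ω : Ω) : ℝ :=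
  if tau Pα X εs ω = 0 then α
  else (S X (tau Pα X εs ω) ω : ℝ) / (tau Pα X εs ω)

end SeqMC

/-!
For `n ≥ 2` the candidates `j = n + 1` for `U_n` and `j = -1` for `L_n` make the events
`S_n ≥ j` resp. `S_n ≤ j` empty, so each defining constraint is satisfiable as soon as the
probability of having already stopped at that boundary is at most `ε_n`. The extremal candidates
`U_n` and `L_n` then satisfy the constraints themselves, and these in turn bound the probability of
having stopped at the respective boundary by time `n`; monotonicity of `ε_n` closes the induction.
If `U_n ≤ L_n`, every path has stopped before `n`, or has `S_n ≥ U_n`, or has `S_n ≤ L_n`, so the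
two constraints at time `n` would give `1 ≤ 2 ε_n < 2 ε < 1`.
-/

-- For an unbounded `s`, `sSup s` is the junk value `0`, which still lies in the lower set `s`.
theorem Int.sSup_mem_of_isLowerSet {s : Set ℤ} (hne : s.Nonempty) (hs : IsLowerSet s) :
    sSup s ∈ s := by
  by_cases hb : BddAbove s
  · exact Int.csSup_mem hne hb
  · obtain ⟨j, hj, hlt⟩ := not_bddAbove_iff.mp hb (sSup s)
    exact hs hlt.le hj

namespace SeqMC

variable {Ω : Type*}

lemma S_le {X : ℕ → Ω → ℕ} (hX : ∀ i ω, X i ω ≤ 1) (n : ℕ) (ω : Ω) : S X n ω ≤ n := by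
  simpa [S] using Finset.sum_le_card_nsmul (Finset.range n) (X · ω) 1 fun i _ => hX i ω

section Congr

variable {X : ℕ → Ω → ℕ} {U L U' L' : ℕ → ℤ} {n : ℕ} {ω : Ω}

lemma notStopped_congr (hU : ∀ k ≤ n, U k = U' k) (hL : ∀ k ≤ n, L k = L' k) :
    notStopped X U L n ω ↔ notStopped X U' L' n ω := by
  refine forall_congr' fun k => imp_congr_right fun _ => ?_
  exact forall_congr' fun hk => by rw [hU k hk, hL k hk]

lemma hitUpperBy_congr (hU : ∀ k ≤ n, U k = U' k) (hL : ∀ k ≤ n, L k = L' k) :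
    hitUpperBy X U L n ω ↔ hitUpperBy X U' L' n ω := by
  refine exists_congr fun k => and_congr_right fun _ => and_congr_right fun hk => ?_
  rw [hU k hk, notStopped_congr (fun i _ => hU i (by omega)) (fun i _ => hL i (by omega))]

lemma hitLowerBy_congr (hU : ∀ k ≤ n, U k = U' k) (hL : ∀ k ≤ n, L k = L' k) :
    hitLowerBy X U L n ω ↔ hitLowerBy X U' L' n ω := by
  refine exists_congr fun k => and_congr_right fun _ => and_congr_right fun hk => ?_
  rw [hL k hk, notStopped_congr (fun i _ => hU i (by omega)) (fun i _ => hL i (by omega))]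

end Congr

section Events

variable (X : ℕ → Ω → ℕ) (U L : ℕ → ℤ) (n : ℕ)

lemma notStopped_or_hitUpperBy_or_hitLowerBy (ω : Ω) :
    notStopped X U L n ω ∨ hitUpperBy X U L n ω ∨ hitLowerBy X U L n ω := by
  induction n with
  | zero => exact Or.inl fun k _ _ => by omega
  | succ n ih =>
    have widen : ∀ {Q : ℕ → Prop}, (∃ k, 1 ≤ k ∧ k ≤ n ∧ Q k) → ∃ k, 1 ≤ k ∧ k ≤ n + 1 ∧ Q k :=
      fun ⟨k, h1, h2, hk⟩ => ⟨k, h1, by omega, hk⟩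
    rcases ih with hns | hup | hlo
    · by_cases hU : U (n + 1) ≤ (S X (n + 1) ω : ℤ)
      · exact Or.inr (Or.inl ⟨n + 1, by omega, le_rfl, hns, hU⟩)
      by_cases hL : (S X (n + 1) ω : ℤ) ≤ L (n + 1)
      · exact Or.inr (Or.inr ⟨n + 1, by omega, le_rfl, hns, hL⟩)
      refine Or.inl fun k h1 h2 => ?_
      rcases Nat.lt_or_ge k (n + 1) with hk | hk
      · exact hns k h1 (by omega)
      · obtain rfl : k = n + 1 := by omega
        omega
    · exact Or.inr (Or.inl (widen hup))
    · exact Or.inr (Or.inr (widen hlo))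

lemma hitUpperBy_succ_subset :
    {ω | hitUpperBy X U L (n + 1) ω} ⊆
      {ω | notStopped X U L n ω ∧ U (n + 1) ≤ (S X (n + 1) ω : ℤ)} ∪
        {ω | hitUpperBy X U L n ω} := by
  rintro ω ⟨k, h1, h2, hns, hk⟩
  rcases Nat.lt_or_ge k (n + 1) with h | h
  · exact Or.inr ⟨k, h1, by omega, hns, hk⟩
  · obtain rfl : k = n + 1 := by omega
    exact Or.inl ⟨hns, hk⟩

lemma hitLowerBy_succ_subset :
    {ω | hitLowerBy X U L (n + 1) ω} ⊆
      {ω | notStopped X U L n ω ∧ (S X (n + 1) ω : ℤ) ≤ L (n + 1)} ∪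
        {ω | hitLowerBy X U L n ω} := by
  rintro ω ⟨k, h1, h2, hns, hk⟩
  rcases Nat.lt_or_ge k (n + 1) with h | h
  · exact Or.inr ⟨k, h1, by omega, hns, hk⟩
  · obtain rfl : k = n + 1 := by omega
    exact Or.inl ⟨hns, hk⟩

lemma univ_subset_upper_union_lower {u l : ℤ} (hul : u ≤ l) :
    Set.univ ⊆
      ({ω | notStopped X U L n ω ∧ u ≤ (S X (n + 1) ω : ℤ)} ∪ {ω | hitUpperBy X U L n ω}) ∪
        ({ω | notStopped X U L n ω ∧ (S X (n + 1) ω : ℤ) ≤ l} ∪ {ω | hitLowerBy X U L n ω}) := by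
  intro ω _
  rcases notStopped_or_hitUpperBy_or_hitLowerBy X U L n ω with hns | hup | hlo
  · rcases le_total u (S X (n + 1) ω) with h | h
    · exact Or.inl (Or.inl ⟨hns, h⟩)
    · exact Or.inr (Or.inl ⟨hns, h.trans hul⟩)
  · exact Or.inl (Or.inr hup)
  · exact Or.inr (Or.inr hlo)

end Events

section Candidates

variable [MeasurableSpace Ω] (Pα : Measure Ω) (X : ℕ → Ω → ℕ) (εs : ℕ → ℝ) (n : ℕ)

noncomputable def upperCandidates : Set ℤ :=
  {j : ℤ | 1 ≤ j ∧
    Pα {ω | notStopped X (Ub Pα X εs) (Lb Pα X εs) (n + 1) ω ∧ j ≤ (S X (n + 2) ω : ℤ)} +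
      Pα {ω | hitUpperBy X (Ub Pα X εs) (Lb Pα X εs) (n + 1) ω} ≤ ENNReal.ofReal (εs (n + 2))}

noncomputable def lowerCandidates : Set ℤ :=
  {j : ℤ |
    Pα {ω | notStopped X (Ub Pα X εs) (Lb Pα X εs) (n + 1) ω ∧ (S X (n + 2) ω : ℤ) ≤ j} +
      Pα {ω | hitLowerBy X (Ub Pα X εs) (Lb Pα X εs) (n + 1) ω} ≤ ENNReal.ofReal (εs (n + 2))}

lemma bnd_truncation_eq :
    (∀ k ≤ n + 1, (fun k => if _ : k < n + 2 then (bnd Pα X εs k).1 else 0) k = Ub Pα X εs k) ∧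
    (∀ k ≤ n + 1, (fun k => if _ : k < n + 2 then (bnd Pα X εs k).2 else 0) k = Lb Pα X εs k) :=
  ⟨fun _ _ => dif_pos (by omega), fun _ _ => dif_pos (by omega)⟩

lemma Ub_add_two : Ub Pα X εs (n + 2) = sInf (upperCandidates Pα X εs n) := by
  obtain ⟨hU, hL⟩ := bnd_truncation_eq Pα X εs n
  rw [Ub, bnd]
  simp only [upperCandidates, notStopped_congr hU hL, hitUpperBy_congr hU hL]

lemma Lb_add_two : Lb Pα X εs (n + 2) = sSup (lowerCandidates Pα X εs n) := by
  obtain ⟨hU, hL⟩ := bnd_truncation_eq Pα X εs n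
  rw [Lb, bnd]
  simp only [lowerCandidates, notStopped_congr hU hL, hitLowerBy_congr hU hL]

lemma isLowerSet_lowerCandidates : IsLowerSet (lowerCandidates Pα X εs n) := by
  intro _ _ hle hj
  refine le_trans (add_le_add (measure_mono ?_) le_rfl) hj
  exact fun _ hω => ⟨hω.1, hω.2.trans hle⟩

end Candidates

section Spending

variable [MeasurableSpace Ω] {Pα : Measure Ω} {X : ℕ → Ω → ℕ} {εs : ℕ → ℝ} {n : ℕ}

lemma hitUpperBy_one_eq_empty (hX : ∀ i ω, X i ω ≤ 1) :
    {ω | hitUpperBy X (Ub Pα X εs) (Lb Pα X εs) 1 ω} = ∅ := by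
  refine Set.eq_empty_of_forall_notMem fun ω ⟨k, h1, h2, _, hk⟩ => ?_
  obtain rfl : k = 1 := by omega
  have := S_le hX 1 ω
  rw [Ub, bnd] at hk
  omega

lemma hitLowerBy_one_eq_empty : {ω | hitLowerBy X (Ub Pα X εs) (Lb Pα X εs) 1 ω} = ∅ := by
  refine Set.eq_empty_of_forall_notMem fun ω ⟨k, h1, h2, _, hk⟩ => ?_
  obtain rfl : k = 1 := by omega
  rw [Lb, bnd] at hk
  omega

lemma Ub_add_two_mem_of_measure_le (hX : ∀ i ω, X i ω ≤ 1)
    (h : Pα {ω | hitUpperBy X (Ub Pα X εs) (Lb Pα X εs) (n + 1) ω} ≤ ENNReal.ofReal (εs (n + 2))) :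
    Ub Pα X εs (n + 2) ∈ upperCandidates Pα X εs n := by
  rw [Ub_add_two]
  refine Int.csInf_mem ⟨n + 3, by omega, ?_⟩ ⟨1, fun _ hj => hj.1⟩
  have hempty : {ω | notStopped X (Ub Pα X εs) (Lb Pα X εs) (n + 1) ω ∧
      (n + 3 : ℤ) ≤ (S X (n + 2) ω : ℤ)} = ∅ :=
    Set.eq_empty_of_forall_notMem fun ω ⟨_, hω⟩ => by have := S_le hX (n + 2) ω; omega
  rwa [hempty, measure_empty, zero_add]

lemma Lb_add_two_mem_of_measure_le
    (h : Pα {ω | hitLowerBy X (Ub Pα X εs) (Lb Pα X εs) (n + 1) ω} ≤ ENNReal.ofReal (εs (n + 2))) :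
    Lb Pα X εs (n + 2) ∈ lowerCandidates Pα X εs n := by
  rw [Lb_add_two]
  refine Int.sSup_mem_of_isLowerSet ⟨-1, ?_⟩ (isLowerSet_lowerCandidates Pα X εs n)
  have hempty : {ω | notStopped X (Ub Pα X εs) (Lb Pα X εs) (n + 1) ω ∧
      (S X (n + 2) ω : ℤ) ≤ -1} = ∅ :=
    Set.eq_empty_of_forall_notMem fun ω ⟨_, hω⟩ => by omega
  simpa [lowerCandidates, hempty] using h

lemma measure_hitUpperBy_le_of_mem (h : Ub Pα X εs (n + 2) ∈ upperCandidates Pα X εs n) :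
    Pα {ω | hitUpperBy X (Ub Pα X εs) (Lb Pα X εs) (n + 2) ω} ≤ ENNReal.ofReal (εs (n + 2)) :=
  (measure_mono (hitUpperBy_succ_subset X _ _ (n + 1))).trans ((measure_union_le _ _).trans h.2)

lemma measure_hitLowerBy_le_of_mem (h : Lb Pα X εs (n + 2) ∈ lowerCandidates Pα X εs n) :
    Pα {ω | hitLowerBy X (Ub Pα X εs) (Lb Pα X εs) (n + 2) ω} ≤ ENNReal.ofReal (εs (n + 2)) :=
  (measure_mono (hitLowerBy_succ_subset X _ _ (n + 1))).trans ((measure_union_le _ _).trans h)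

lemma Ub_add_two_mem (hX : ∀ i ω, X i ω ≤ 1) (hmono : Monotone εs) (n : ℕ) :
    Ub Pα X εs (n + 2) ∈ upperCandidates Pα X εs n := by
  induction n with
  | zero => exact Ub_add_two_mem_of_measure_le hX (by simp [hitUpperBy_one_eq_empty hX])
  | succ n ih =>
    exact Ub_add_two_mem_of_measure_le hX
      ((measure_hitUpperBy_le_of_mem ih).trans (ENNReal.ofReal_le_ofReal (hmono (n + 2).le_succ)))

lemma Lb_add_two_mem (hmono : Monotone εs) (n : ℕ) :
    Lb Pα X εs (n + 2) ∈ lowerCandidates Pα X εs n := by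
  induction n with
  | zero => exact Lb_add_two_mem_of_measure_le (by simp [hitLowerBy_one_eq_empty])
  | succ n ih =>
    exact Lb_add_two_mem_of_measure_le
      ((measure_hitLowerBy_le_of_mem ih).trans (ENNReal.ofReal_le_ofReal (hmono (n + 2).le_succ)))

end Spending

theorem statement_9_general {Ω : Type*} [MeasurableSpace Ω]
    (α ε : ℝ) (hα : α ∈ Set.Ioo (0:ℝ) 1)
    (εs : ℕ → ℝ) (hmono : Monotone εs)
    (hnonneg : ∀ n, 0 ≤ εs n) (hlt : ∀ n, εs n < ε)
    (P : ℝ → Measure Ω) (X : ℕ → Ω → ℕ)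
    (hBern : ∀ p ∈ Set.Icc (0:ℝ) 1, IsBernoulliSeq (P p) p X)
    (hεhalf : ε < 1 / 2) :
    ∀ n : ℕ, 1 ≤ n → Lb (P α) X εs n < Ub (P α) X εs n := by
  obtain ⟨hprob, -, hX, -, -⟩ := hBern α (Set.Ioo_subset_Icc_self hα)
  rintro (_ | _ | m) hn
  · omega
  · rw [Ub, Lb, bnd]; norm_num
  by_contra! hle
  have hU : Ub (P α) X εs (m + 2) ∈ upperCandidates (P α) X εs m := Ub_add_two_mem hX hmono m
  have hL : Lb (P α) X εs (m + 2) ∈ lowerCandidates (P α) X εs m := Lb_add_two_mem hmono m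
  have hmass : 1 ≤ ENNReal.ofReal (εs (m + 2)) + ENNReal.ofReal (εs (m + 2)) := calc
    1 = P α Set.univ := measure_univ.symm
    _ ≤ _ := measure_mono (univ_subset_upper_union_lower X _ _ (m + 1) hle)
    _ ≤ _ := (measure_union_le _ _).trans
      (add_le_add ((measure_union_le _ _).trans hU.2) ((measure_union_le _ _).trans hL))
  rw [← ENNReal.ofReal_add (hnonneg _) (hnonneg _), ENNReal.one_le_ofReal] at hmass
  linarith [hlt (m + 2)]

theorem statement_9 {Ω : Type*} [MeasurableSpace Ω]
    (α ε : ℝ) (hα : α ∈ Set.Ioo (0:ℝ) 1) (hε : ε ∈ Set.Ioo (0:ℝ) 1)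
    (εs : ℕ → ℝ) (hεs0 : εs 0 = 0) (hmono : Monotone εs)
    (hnonneg : ∀ n, 0 ≤ εs n) (hlt : ∀ n, εs n < ε)
    (hlim : Filter.Tendsto εs Filter.atTop (nhds ε))
    (P : ℝ → Measure Ω) (X : ℕ → Ω → ℕ)
    (hBern : ∀ p ∈ Set.Icc (0:ℝ) 1, IsBernoulliSeq (P p) p X)
    (hεhalf : ε < 1 / 2) :
    ∀ n : ℕ, 1 ≤ n → Lb (P α) X εs n < Ub (P α) X εs n :=
  statement_9_general α ε hα εs hmono hnonneg hlt P X hBern hεhalf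

end SeqMC
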